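/- In the (4,2) heterogeneous DSS over F_q (q ≥ 2) where node U_1 stores (x_1, x_2), U_2 stores (x_3, x_4), U_3 stores (x_2, x_2+x_4, x_1+x_2+x_3+x_4), and U_4 stores (x_1, x_1+x_3, x_1+x_2+x_3+x_4), any two of the four nodes jointly store vectors spanning the full space F_q^4; i.e., the file (x_1,x_2,x_3,x_4) can be reconstructed from any 2 nodes. -/
import Mathlib

/-- The packets (as linear functionals of the file `(x₁,x₂,x₃,x₄) ∈ F_q⁴`,
identified with their coefficient vectors) stored on the four nodes of the
(4,2) heterogeneous DSS: `U₁ = {x₁, x₂}`, `U₂ = {x₃, x₄}`,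
`U₃ = {x₂, x₂+x₄, x₁+x₂+x₃+x₄}`, `U₄ = {x₁, x₁+x₃, x₁+x₂+x₃+x₄}`. -/
def node10 (F : Type*) [Field F] : Fin 4 → Set (Fin 4 → F) :=
  ![{![1,0,0,0], ![0,1,0,0]},
    {![0,0,1,0], ![0,0,0,1]},
    {![0,1,0,0], ![0,1,0,1], ![1,1,1,1]},
    {![1,0,0,0], ![1,0,1,0], ![1,1,1,1]}]

private lemma span_eq_top_of_basis_mem {F : Type*} [Field F] (S : Set (Fin 4 → F))
    (h0 : (![1,0,0,0] : Fin 4 → F) ∈ Submodule.span F S)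
    (h1 : (![0,1,0,0] : Fin 4 → F) ∈ Submodule.span F S)
    (h2 : (![0,0,1,0] : Fin 4 → F) ∈ Submodule.span F S)
    (h3 : (![0,0,0,1] : Fin 4 → F) ∈ Submodule.span F S) :
    Submodule.span F S = ⊤ := by
  rw [eq_top_iff]
  rintro x -
  have hx : x = x 0 • ![1,0,0,0] + x 1 • ![0,1,0,0] + x 2 • ![0,0,1,0]
      + x 3 • ![0,0,0,1] := by
    funext k; fin_cases k <;> simp
  rw [hx]
  exact add_mem (add_mem (add_mem (Submodule.smul_mem _ _ h0)
    (Submodule.smul_mem _ _ h1)) (Submodule.smul_mem _ _ h2))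
    (Submodule.smul_mem _ _ h3)

private lemma case01 (F : Type*) [Field F] :
    Submodule.span F (node10 F 0 ∪ node10 F 1) = ⊤ := by
  show Submodule.span F ({![1,0,0,0], ![0,1,0,0]} ∪ {![0,0,1,0], ![0,0,0,1]}) = ⊤
  exact span_eq_top_of_basis_mem _ (Submodule.subset_span (by simp))
    (Submodule.subset_span (by simp)) (Submodule.subset_span (by simp))
    (Submodule.subset_span (by simp))

private lemma case02 (F : Type*) [Field F] :
    Submodule.span F (node10 F 0 ∪ node10 F 2) = ⊤ := by
  show Submodule.span F
    ({![1,0,0,0], ![0,1,0,0]} ∪ {![0,1,0,0], ![0,1,0,1], ![1,1,1,1]}) = ⊤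
  refine span_eq_top_of_basis_mem _ (Submodule.subset_span (by simp))
    (Submodule.subset_span (by simp)) ?_ ?_
  · have h : (![0,0,1,0] : Fin 4 → F) = ![1,1,1,1] - ![1,0,0,0] - ![0,1,0,1] := by
      funext k; fin_cases k <;> simp
    rw [h]
    exact sub_mem (sub_mem (Submodule.subset_span (by simp))
      (Submodule.subset_span (by simp))) (Submodule.subset_span (by simp))
  · have h : (![0,0,0,1] : Fin 4 → F) = ![0,1,0,1] - ![0,1,0,0] := by
      funext k; fin_cases k <;> simp
    rw [h]
    exact sub_mem (Submodule.subset_span (by simp)) (Submodule.subset_span (by simp))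

private lemma case03 (F : Type*) [Field F] :
    Submodule.span F (node10 F 0 ∪ node10 F 3) = ⊤ := by
  show Submodule.span F
    ({![1,0,0,0], ![0,1,0,0]} ∪ {![1,0,0,0], ![1,0,1,0], ![1,1,1,1]}) = ⊤
  refine span_eq_top_of_basis_mem _ (Submodule.subset_span (by simp))
    (Submodule.subset_span (by simp)) ?_ ?_
  · have h : (![0,0,1,0] : Fin 4 → F) = ![1,0,1,0] - ![1,0,0,0] := by
      funext k; fin_cases k <;> simp
    rw [h]
    exact sub_mem (Submodule.subset_span (by simp)) (Submodule.subset_span (by simp))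
  · have h : (![0,0,0,1] : Fin 4 → F) = ![1,1,1,1] - ![0,1,0,0] - ![1,0,1,0] := by
      funext k; fin_cases k <;> simp
    rw [h]
    exact sub_mem (sub_mem (Submodule.subset_span (by simp))
      (Submodule.subset_span (by simp))) (Submodule.subset_span (by simp))

private lemma case12 (F : Type*) [Field F] :
    Submodule.span F (node10 F 1 ∪ node10 F 2) = ⊤ := by
  show Submodule.span F
    ({![0,0,1,0], ![0,0,0,1]} ∪ {![0,1,0,0], ![0,1,0,1], ![1,1,1,1]}) = ⊤
  refine span_eq_top_of_basis_mem _ ?_ (Submodule.subset_span (by simp))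
    (Submodule.subset_span (by simp)) (Submodule.subset_span (by simp))
  have h : (![1,0,0,0] : Fin 4 → F)
      = ![1,1,1,1] - ![0,1,0,0] - ![0,0,1,0] - ![0,0,0,1] := by
    funext k; fin_cases k <;> simp
  rw [h]
  exact sub_mem (sub_mem (sub_mem (Submodule.subset_span (by simp))
    (Submodule.subset_span (by simp))) (Submodule.subset_span (by simp)))
    (Submodule.subset_span (by simp))

private lemma case13 (F : Type*) [Field F] :
    Submodule.span F (node10 F 1 ∪ node10 F 3) = ⊤ := by
  show Submodule.span F
    ({![0,0,1,0], ![0,0,0,1]} ∪ {![1,0,0,0], ![1,0,1,0], ![1,1,1,1]}) = ⊤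
  refine span_eq_top_of_basis_mem _ (Submodule.subset_span (by simp)) ?_
    (Submodule.subset_span (by simp)) (Submodule.subset_span (by simp))
  have h : (![0,1,0,0] : Fin 4 → F)
      = ![1,1,1,1] - ![1,0,0,0] - ![0,0,1,0] - ![0,0,0,1] := by
    funext k; fin_cases k <;> simp
  rw [h]
  exact sub_mem (sub_mem (sub_mem (Submodule.subset_span (by simp))
    (Submodule.subset_span (by simp))) (Submodule.subset_span (by simp)))
    (Submodule.subset_span (by simp))

private lemma case23 (F : Type*) [Field F] :
    Submodule.span F (node10 F 2 ∪ node10 F 3) = ⊤ := by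
  show Submodule.span F
    ({![0,1,0,0], ![0,1,0,1], ![1,1,1,1]} ∪ {![1,0,0,0], ![1,0,1,0], ![1,1,1,1]}) = ⊤
  refine span_eq_top_of_basis_mem _ (Submodule.subset_span (by simp))
    (Submodule.subset_span (by simp)) ?_ ?_
  · have h : (![0,0,1,0] : Fin 4 → F) = ![1,0,1,0] - ![1,0,0,0] := by
      funext k; fin_cases k <;> simp
    rw [h]
    exact sub_mem (Submodule.subset_span (by simp)) (Submodule.subset_span (by simp))
  · have h : (![0,0,0,1] : Fin 4 → F) = ![0,1,0,1] - ![0,1,0,0] := by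
      funext k; fin_cases k <;> simp
    rw [h]
    exact sub_mem (Submodule.subset_span (by simp)) (Submodule.subset_span (by simp))

theorem stmt10 (F : Type*) [Field F] [Fintype F] (hq : 2 ≤ Fintype.card F)
    (i j : Fin 4) (hij : i ≠ j) :
    Submodule.span F (node10 F i ∪ node10 F j) = ⊤ := by
  fin_cases i <;> fin_cases j <;>
    first
      | exact absurd rfl hij
      | exact case01 F
      | exact case02 F
      | exact case03 F
      | exact case12 F
      | exact case13 F
      | exact case23 F
      | (rw [Set.union_comm]; exact case01 F)
      | (rw [Set.union_comm]; exact case02 F)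
      | (rw [Set.union_comm]; exact case03 F)
      | (rw [Set.union_comm]; exact case12 F)
      | (rw [Set.union_comm]; exact case13 F)
      | (rw [Set.union_comm]; exact case23 F)
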